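/- arXiv:2105.12017 — 2 statements merged into one kernel-verified Lean document; each statement's English description precedes it below -/
import Mathlib

section
/- Let (X,d) be a metric space and let Γ ⊆ X × X be a cyclically monotone set for the cost c(x,y) = d(x,y)². Let γ¹, γ² : [0,1] → X be constant-speed minimizing geodesics with (γ¹_0, γ¹_1) ∈ Γ and (γ²_0, γ²_1) ∈ Γ, and suppose γ¹_t = γ²_t for some t ∈ (0,1). Then d(γ¹_0, γ¹_1) = d(γ²_0, γ²_1), and moreover d²(γ¹_0, γ²_1) + d²(γ²_0, γ¹_1) = d²(γ¹_0, γ¹_1) + d²(γ²_0, γ²_1). -/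
open MeasureTheory Set Metric ENNReal Filter Topology
open scoped Classical

noncomputable section

/-- The (topological) support of a measure: the set of points all of whose open
neighbourhoods have positive measure. -/
def msupport {α : Type*} [TopologicalSpace α] [MeasurableSpace α]
    (μ : Measure α) : Set α :=
  {x | ∀ U : Set α, IsOpen U → x ∈ U → 0 < μ U}

/-- Borel measurable structure on the space of continuous curves `C([0,1]; Y)`. -/
instance contCurveMeasurableSpace {Y : Type*} [TopologicalSpace Y] :
    MeasurableSpace C(unitInterval, Y) := borel _

/-- The distortion coefficient `σ_{K,N}^{(t)}(θ)` (finite part, real-valued). -/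
def sigmaAux (K N t θ : ℝ) : ℝ :=
  if K * θ ^ 2 < 0 then
    Real.sin (t * θ * Real.sqrt (K / N)) / Real.sin (θ * Real.sqrt (K / N))
  else if K * θ ^ 2 = 0 then t
  else Real.sinh (t * θ * Real.sqrt (-K / N)) / Real.sinh (θ * Real.sqrt (-K / N))

/-- The distortion coefficient `σ_{K,N}^{(t)}(θ)`, with value `+∞` when `K θ² ≤ N π²`. -/
def sigmaCoeff (K N t θ : ℝ) : ℝ≥0∞ :=
  if K * θ ^ 2 ≤ N * Real.pi ^ 2 then ⊤ else ENNReal.ofReal (sigmaAux K N t θ)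

/-- The Rényi entropy `S_{N,m}(μ) = ∫ ρ^{(N-1)/N} dm` when `μ = ρ m ≪ m`, `+∞` otherwise. -/
def entS {α : Type*} [MeasurableSpace α] (m : Measure α) (N : ℝ) (μ : Measure α) : ℝ≥0∞ :=
  if μ ≪ m then ∫⁻ x, (μ.rnDeriv m x) ^ ((N - 1) / N) ∂m else ⊤

section MMS

variable {X : Type*} [MetricSpace X] [MeasurableSpace X] [BorelSpace X]

/-- A quasi-Radon measure: a nonzero, complete, effectively locally finite Borel measure
with full support. -/
structure IsQuasiRadon (m : Measure X) : Prop where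
  ne_zero : m ≠ 0
  complete : ∀ s t : Set X, s ⊆ t → MeasurableSet t → m t = 0 → MeasurableSet s
  effLocFinite : ∀ A : Set X, MeasurableSet A → 0 < m A →
    ∃ U : Set X, IsOpen U ∧ m U < ⊤ ∧ 0 < m (A ∩ U)
  fullSupport : ∀ (x : X) (U : Set X), IsOpen U → x ∈ U → 0 < m U

/-- The singular set of `m`: points all of whose neighbourhoods have infinite measure. -/
def singularSet (m : Measure X) : Set X :=
  {x | ∀ U : Set X, IsOpen U → x ∈ U → m U = ⊤}

/-- Finite second moment. -/
def FiniteSecondMoment (μ : Measure X) : Prop :=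
  ∃ x₀ : X, ∫⁻ x, edist x x₀ ^ 2 ∂μ < ⊤

/-- `π` is a coupling (admissible transport plan) between `μ` and `ν`. -/
def IsCoupling (π : Measure (X × X)) (μ ν : Measure X) : Prop :=
  π.map Prod.fst = μ ∧ π.map Prod.snd = ν

/-- Quadratic transport cost of a plan. -/
def transportCost (π : Measure (X × X)) : ℝ≥0∞ := ∫⁻ p, edist p.1 p.2 ^ 2 ∂π

/-- Squared Wasserstein distance. -/
def W2sq (μ ν : Measure X) : ℝ≥0∞ :=
  ⨅ (π : Measure (X × X)) (_ : IsCoupling π μ ν), transportCost π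

/-- Wasserstein distance `W₂`. -/
def W2 (μ ν : Measure X) : ℝ≥0∞ := W2sq μ ν ^ (1 / 2 : ℝ)

/-- `π` is an optimal coupling between `μ` and `ν` for the quadratic cost. -/
def IsOptimalCoupling (π : Measure (X × X)) (μ ν : Measure X) : Prop :=
  IsCoupling π μ ν ∧ transportCost π = W2sq μ ν

/-- `π` is an optimal transport plan (between its own marginals). -/
def IsOptimalPlan (π : Measure (X × X)) : Prop :=
  IsOptimalCoupling π (π.map Prod.fst) (π.map Prod.snd)

/-- Evaluation of a curve at time `t ∈ [0,1]`. -/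
def evt (t : ℝ) (γ : C(unitInterval, X)) : X := γ (Set.projIcc (0:ℝ) 1 zero_le_one t)

/-- Constant speed minimizing geodesic, as a continuous curve on `[0,1]`. -/
def IsGeodesicMap (γ : C(unitInterval, X)) : Prop :=
  ∀ s t : unitInterval, dist (γ s) (γ t) = |(t : ℝ) - (s : ℝ)| * dist (γ 0) (γ 1)

/-- Optimal geodesic plan between `μ0` and `μ1`: a probability measure on curves,
concentrated on constant-speed geodesics, with the prescribed marginals at times `0, 1`,
whose `(e₀,e₁)`-pushforward is an optimal coupling. -/
def IsOptGeoPlan (π : Measure C(unitInterval, X)) (μ0 μ1 : Measure X) : Prop :=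
  IsProbabilityMeasure π ∧ π {γ | ¬ IsGeodesicMap γ} = 0 ∧
  π.map (evt 0) = μ0 ∧ π.map (evt 1) = μ1 ∧
  IsOptimalCoupling (π.map fun γ => (evt 0 γ, evt 1 γ)) μ0 μ1

/-- A non-branching set of geodesics. -/
def IsNonBranchingSet (G : Set C(unitInterval, X)) : Prop :=
  (∀ γ ∈ G, IsGeodesicMap γ) ∧
  ∀ γ₁ ∈ G, ∀ γ₂ ∈ G, ∀ t : unitInterval, 0 < (t : ℝ) → (t : ℝ) < 1 →
    (∀ s : unitInterval, (s : ℝ) ≤ (t : ℝ) → γ₁ s = γ₂ s) → γ₁ = γ₂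

/-- Essentially non-branching metric measure space. -/
def EssentiallyNonBranching (m : Measure X) : Prop :=
  ∀ μ0 μ1 : Measure X, IsProbabilityMeasure μ0 → IsProbabilityMeasure μ1 →
    FiniteSecondMoment μ0 → FiniteSecondMoment μ1 → μ0 ≪ m → μ1 ≪ m →
    ∀ π : Measure C(unitInterval, X), IsOptGeoPlan π μ0 μ1 →
      ∃ G : Set C(unitInterval, X), IsNonBranchingSet G ∧ π Gᶜ = 0

/-- Membership in `P*_N(X,m)`: probability, finite second moment, absolutely continuous,
bounded support, finite Rényi entropy. -/
def MemPstarN (m : Measure X) (N : ℝ) (μ : Measure X) : Prop :=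
  IsProbabilityMeasure μ ∧ FiniteSecondMoment μ ∧ μ ≪ m ∧
  Bornology.IsBounded (msupport μ) ∧ entS m N μ < ⊤

/-- The functional `R_{K,N}^{(t)}(π | m)`. -/
def RKN (m : Measure X) (K N t : ℝ) (μ0 μ1 : Measure X) (π : Measure (X × X)) : ℝ≥0∞ :=
  ∫⁻ p, sigmaCoeff K N (1 - t) (dist p.1 p.2) * (μ0.rnDeriv m p.1) ^ (-(1 / N))
      + sigmaCoeff K N t (dist p.1 p.2) * (μ1.rnDeriv m p.2) ^ (-(1 / N)) ∂π

/-- A constant speed `W₂`-geodesic parameterized on `[0,1]`. -/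
def IsW2GeodesicOn (γ : ℝ → Measure X) : Prop :=
  ∀ s ∈ Icc (0:ℝ) 1, ∀ t ∈ Icc (0:ℝ) 1,
    W2 (γ s) (γ t) = ENNReal.ofReal |t - s| * W2 (γ 0) (γ 1)

/-- The reduced curvature-dimension condition `CD*(K,N)` for marginals supported in `C`. -/
def CDstarOn (m : Measure X) (K N : ℝ) (C : Set X) : Prop :=
  ∀ μ0 μ1 : Measure X, MemPstarN m N μ0 → MemPstarN m N μ1 →
    msupport μ0 ⊆ C → msupport μ1 ⊆ C →
    ∃ π : Measure (X × X), IsOptimalCoupling π μ0 μ1 ∧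
      ∃ γ : ℝ → Measure X, γ 0 = μ0 ∧ γ 1 = μ1 ∧ IsW2GeodesicOn γ ∧
        (∀ t ∈ Icc (0:ℝ) 1, MemPstarN m N (γ t)) ∧
        ∀ t ∈ Icc (0:ℝ) 1, ∀ N' ∈ Ico N (0:ℝ), entS m N' (γ t) ≤ RKN m K N' t μ0 μ1 π

/-- The reduced curvature-dimension condition `CD*(K,N)` for `N < 0`. -/
def CDstar (m : Measure X) (K N : ℝ) : Prop :=
  ∀ μ0 μ1 : Measure X, MemPstarN m N μ0 → MemPstarN m N μ1 →
    ∃ π : Measure (X × X), IsOptimalCoupling π μ0 μ1 ∧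
      ∃ γ : ℝ → Measure X, γ 0 = μ0 ∧ γ 1 = μ1 ∧ IsW2GeodesicOn γ ∧
        (∀ t ∈ Icc (0:ℝ) 1, MemPstarN m N (γ t)) ∧
        ∀ t ∈ Icc (0:ℝ) 1, ∀ N' ∈ Ico N (0:ℝ), entS m N' (γ t) ≤ RKN m K N' t μ0 μ1 π

/-- The condition `CD*(K-,N)` for marginals supported in `C`. -/
def CDstarMinusOn (m : Measure X) (K N : ℝ) (C : Set X) : Prop :=
  ∀ K' < K, CDstarOn m K' N C

/-- The condition `CD*(K-,N)`. -/
def CDstarMinus (m : Measure X) (K N : ℝ) : Prop :=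
  ∀ K' < K, CDstar m K' N

/-- `P*_N(X,m)` is a geodesic space: any two of its members are joined by a
`W₂`-geodesic lying in `P*_N(X,m)`. -/
def PstarNGeodesicSpace (m : Measure X) (N : ℝ) : Prop :=
  ∀ μ0 μ1 : Measure X, MemPstarN m N μ0 → MemPstarN m N μ1 →
    ∃ γ : ℝ → Measure X, γ 0 = μ0 ∧ γ 1 = μ1 ∧ IsW2GeodesicOn γ ∧
      ∀ t ∈ Icc (0:ℝ) 1, MemPstarN m N (γ t)

/-- `θ⁰` associated to a geodesic plan: the infimum of `d(γ₀,γ₁)` over the support. -/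
def theta0 (π : Measure C(unitInterval, X)) : ℝ :=
  sInf ((fun γ => dist (evt 0 γ) (evt 1 γ)) '' msupport π)

/-- Property `C(k)` of the globalization argument. -/
def PropC (m : Measure X) (K' N R : ℝ) (o : X) (k : ℕ) : Prop :=
  ∀ π : Measure C(unitInterval, X),
    IsOptGeoPlan π (π.map (evt 0)) (π.map (evt 1)) →
    (∀ t ∈ Icc (0:ℝ) 1, MemPstarN m N (π.map (evt t))) →
    msupport (π.map (evt 0)) ⊆ ball o R →
    msupport (π.map (evt 1)) ⊆ ball o R →
    ∀ s ∈ Icc (0:ℝ) 1, ∀ t ∈ Icc (0:ℝ) 1, t - s = (2:ℝ)⁻¹ ^ k →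
      ∀ r ∈ Icc (0:ℝ) 1, ∀ N' ∈ Ico N (0:ℝ),
        entS m N' (π.map (evt (s + r * (t - s)))) ≤
          sigmaCoeff K' N' (1 - r) (theta0 π / 2 ^ k) * entS m N' (π.map (evt s)) +
          sigmaCoeff K' N' r (theta0 π / 2 ^ k) * entS m N' (π.map (evt t))

/-- `θ` between two marginals: inf of distances between the supports when `K ≥ 0`,
sup when `K < 0`. -/
def thetaKN (K : ℝ) (μ0 μ1 : Measure X) : ℝ :=
  if 0 ≤ K then sInf (Set.image2 dist (msupport μ0) (msupport μ1))
  else sSup (Set.image2 dist (msupport μ0) (msupport μ1))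

end MMS

/-- Cyclical monotonicity of a set for a cost `c`. -/
def CyclicallyMonotoneCost {Y : Type*} (c : Y → Y → ℝ) (Γ : Set (Y × Y)) : Prop :=
  ∀ (k : ℕ) (p : Fin k → Y × Y), (∀ i, p i ∈ Γ) → ∀ σ : Equiv.Perm (Fin k),
    ∑ i, c (p i).1 (p i).2 ≤ ∑ i, c (p i).1 (p (σ i)).2

/-- A constant-speed minimizing geodesic parameterized on `[0,1]`. -/
def IsConstSpeedGeodesic {Y : Type*} [MetricSpace Y] (γ : ℝ → Y) : Prop :=
  ∀ s ∈ Icc (0:ℝ) 1, ∀ t ∈ Icc (0:ℝ) 1,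
    dist (γ s) (γ t) = |t - s| * dist (γ 0) (γ 1)

/-- two geodesics with endpoints in a cyclically monotone set (for the
squared-distance cost) crossing at an intermediate time have equal length, and the
cross distances satisfy the stated equality. -/
theorem geodesics_crossing_cyclically_monotone
    {Y : Type*} [MetricSpace Y] (Γ : Set (Y × Y))
    (hΓ : CyclicallyMonotoneCost (fun x y => dist x y ^ 2) Γ)
    (γ1 γ2 : ℝ → Y)
    (h1 : IsConstSpeedGeodesic γ1) (h2 : IsConstSpeedGeodesic γ2)
    (he1 : (γ1 0, γ1 1) ∈ Γ) (he2 : (γ2 0, γ2 1) ∈ Γ)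
    (t : ℝ) (ht : t ∈ Ioo (0:ℝ) 1) (heq : γ1 t = γ2 t) :
    dist (γ1 0) (γ1 1) = dist (γ2 0) (γ2 1) ∧
    dist (γ1 0) (γ2 1) ^ 2 + dist (γ2 0) (γ1 1) ^ 2
      = dist (γ1 0) (γ1 1) ^ 2 + dist (γ2 0) (γ2 1) ^ 2 := by
  obtain ⟨ht0, ht1⟩ := ht
  have htI : t ∈ Icc (0:ℝ) 1 := ⟨le_of_lt ht0, le_of_lt ht1⟩
  set d1 := dist (γ1 0) (γ1 1) with hd1
  set d2 := dist (γ2 0) (γ2 1) with hd2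
  set A := dist (γ1 0) (γ2 1) with hA
  set B := dist (γ2 0) (γ1 1) with hB
  -- cyclic monotonicity with the swap of two pairs
  have hmono : d1 ^ 2 + d2 ^ 2 ≤ A ^ 2 + B ^ 2 := by
    have := hΓ 2 ![(γ1 0, γ1 1), (γ2 0, γ2 1)]
      (by intro i; fin_cases i <;> simpa using ‹_›) (Equiv.swap 0 1)
    simpa [Fin.sum_univ_two, Equiv.swap_apply_left, Equiv.swap_apply_right,
      hd1, hd2, hA, hB] using this
  -- triangle inequalities through the crossing point
  have h1t : dist (γ1 0) (γ1 t) = t * d1 := by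
    have := h1 0 (by norm_num) t htI
    rwa [sub_zero, abs_of_pos ht0] at this
  have h1t' : dist (γ1 t) (γ1 1) = (1 - t) * d1 := by
    have := h1 t htI 1 (by norm_num)
    rwa [abs_of_pos (by linarith)] at this
  have h2t : dist (γ2 0) (γ2 t) = t * d2 := by
    have := h2 0 (by norm_num) t htI
    rwa [sub_zero, abs_of_pos ht0] at this
  have h2t' : dist (γ2 t) (γ2 1) = (1 - t) * d2 := by
    have := h2 t htI 1 (by norm_num)
    rwa [abs_of_pos (by linarith)] at this
  have htriA : A ≤ t * d1 + (1 - t) * d2 := by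
    calc A ≤ dist (γ1 0) (γ1 t) + dist (γ1 t) (γ2 1) := dist_triangle _ _ _
    _ = t * d1 + (1 - t) * d2 := by rw [h1t, heq, h2t']
  have htriB : B ≤ t * d2 + (1 - t) * d1 := by
    calc B ≤ dist (γ2 0) (γ2 t) + dist (γ2 t) (γ1 1) := dist_triangle _ _ _
    _ = t * d2 + (1 - t) * d1 := by rw [h2t, ← heq, h1t']
  have hA0 : 0 ≤ A := dist_nonneg
  have hB0 : 0 ≤ B := dist_nonneg
  have hA2 : A ^ 2 ≤ (t * d1 + (1 - t) * d2) ^ 2 := pow_le_pow_left₀ hA0 htriA 2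
  have hB2 : B ^ 2 ≤ (t * d2 + (1 - t) * d1) ^ 2 := pow_le_pow_left₀ hB0 htriB 2
  have htt : 0 < t * (1 - t) := mul_pos ht0 (by linarith)
  have hkey : t * (1 - t) * (d1 - d2) ^ 2 ≤ t * (1 - t) * 0 := by nlinarith
  have h0 : (d1 - d2) ^ 2 ≤ 0 := le_of_mul_le_mul_left hkey htt
  have hd12 : d1 = d2 := by nlinarith [sq_nonneg (d1 - d2)]
  refine ⟨hd12, ?_⟩
  nlinarith [hd12]
end
end

section
/- Let m be a σ-finite measure, N < 0, N' ∈ [N,0), and let μ = Σ_j α_j μ_j be a countable convex combination (α_j ≥ 0, Σ_j α_j = 1) of probability measures μ_j = ρ_j m absolutely continuous with respect to m. Then S_{N',m}(μ) ≥ Σ_j α_j^{1−1/N'} S_{N',m}(μ_j), and equality holds if the measures μ_j are pairwise mutually singular. -/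
open MeasureTheory Set Metric ENNReal Filter Topology
open scoped Classical

noncomputable section

/-! With `p = (N' - 1)/N' ≥ 1` and `ρ_j = dμ_j/dm`, the combination `Σ_j α_j μ_j` has density
`Σ_j α_j ρ_j`, so both sides of the inequality are integrals against `m`: the left one of
`(Σ_j α_j ρ_j)^p`, the right one of `Σ_j (α_j ρ_j)^p`. Pointwise, `(Σ_j x_j)^p ≥ Σ_j x_j^p` for
`p ≥ 1`, with equality when at most one `x_j` is nonzero, which is the case `m`-a.e. when the
`μ_j` are pairwise mutually singular. -/

theorem ENNReal.tsum_rpow_le_rpow_tsum {ι : Type*} (f : ι → ℝ≥0∞) {p : ℝ} (hp : 1 ≤ p) :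
    ∑' i, f i ^ p ≤ (∑' i, f i) ^ p := by
  have hsplit : ∀ x : ℝ≥0∞, x ^ p = x * x ^ (p - 1) := fun x => by
    conv_lhs => rw [← add_sub_cancel 1 p]
    rw [rpow_add_of_nonneg _ _ zero_le_one (by linarith), rpow_one]
  calc ∑' i, f i ^ p = ∑' i, f i * f i ^ (p - 1) := by simp only [hsplit]
    _ ≤ ∑' i, f i * (∑' j, f j) ^ (p - 1) := by
      gcongr with i
      exact ENNReal.le_tsum i
    _ = (∑' i, f i) ^ p := by rw [ENNReal.tsum_mul_right, ← hsplit]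

theorem ENNReal.rpow_tsum_eq_tsum_rpow_of_pairwise_mul_eq_zero {ι : Type*} (f : ι → ℝ≥0∞)
    {p : ℝ} (hp : 0 < p) (hf : Pairwise fun i j => f i * f j = 0) :
    (∑' i, f i) ^ p = ∑' i, f i ^ p := by
  by_cases hzero : ∀ i, f i = 0
  · simp [hzero, zero_rpow_of_pos hp]
  obtain ⟨i₀, hi₀⟩ := not_forall.1 hzero
  have hsupp : ∀ i, i ≠ i₀ → f i = 0 := fun i hi =>
    (mul_eq_zero.1 (hf hi)).resolve_right hi₀
  rw [tsum_eq_single i₀ hsupp,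
    tsum_eq_single i₀ fun i hi => by rw [hsupp i hi, zero_rpow_of_pos hp]]

section RenyiEntropy

variable {α : Type*} [MeasurableSpace α] {m : Measure α}

theorem MeasureTheory.Measure.MutuallySingular.ae_rnDeriv_mul_rnDeriv_eq_zero
    {μ ν : Measure α} (h : μ ⟂ₘ ν) :
    ∀ᵐ x ∂m, μ.rnDeriv m x * ν.rnDeriv m x = 0 := by
  obtain ⟨s, hs, hμs, hνs⟩ := h
  have hμ : ∀ᵐ x ∂m, x ∈ s → μ.rnDeriv m x = 0 := by
    rw [← setLIntegral_eq_zero_iff hs (measurable_rnDeriv μ m)]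
    exact le_antisymm ((setLIntegral_rnDeriv_le s).trans hμs.le) bot_le
  have hν : ∀ᵐ x ∂m, x ∈ sᶜ → ν.rnDeriv m x = 0 := by
    rw [← setLIntegral_eq_zero_iff hs.compl (measurable_rnDeriv ν m)]
    exact le_antisymm ((setLIntegral_rnDeriv_le sᶜ).trans hνs.le) bot_le
  filter_upwards [hμ, hν] with x hxμ hxν
  by_cases hx : x ∈ s
  · rw [hxμ hx, zero_mul]
  · rw [hxν hx, mul_zero]

theorem MeasureTheory.Measure.ae_pairwise_rnDeriv_mul_eq_zero {ι : Type*} [Countable ι]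
    {μ : ι → Measure α} (h : Pairwise fun i j => μ i ⟂ₘ μ j) :
    ∀ᵐ x ∂m, Pairwise fun i j => (μ i).rnDeriv m x * (μ j).rnDeriv m x = 0 := by
  simp only [Pairwise, ae_all_iff]
  intro i j hij
  exact (h hij).ae_rnDeriv_mul_rnDeriv_eq_zero

theorem MeasureTheory.Measure.sum_smul_eq_withDensity_tsum_rnDeriv {ι : Type*} [Countable ι]
    (a : ι → ℝ≥0∞) {μ : ι → Measure α} [∀ i, (μ i).HaveLebesgueDecomposition m]
    (hac : ∀ i, μ i ≪ m) :
    Measure.sum (fun i => a i • μ i)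
      = m.withDensity fun x => ∑' i, a i * (μ i).rnDeriv m x := by
  have hsummand : ∀ i, a i • μ i = m.withDensity (a i • (μ i).rnDeriv m) := fun i => by
    rw [withDensity_smul _ (measurable_rnDeriv _ _), withDensity_rnDeriv_eq _ _ (hac i)]
  simp_rw [hsummand, ← withDensity_tsum fun i => (measurable_rnDeriv (μ i) m).const_smul (a i)]
  congr 1
  ext x
  simp [ENNReal.tsum_apply]

theorem entS_of_absolutelyContinuous {μ : Measure α} (N : ℝ) (h : μ ≪ m) :
    entS m N μ = ∫⁻ x, μ.rnDeriv m x ^ ((N - 1) / N) ∂m :=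
  if_pos h

theorem entS_sum_smul [SigmaFinite m] {ι : Type*} [Countable ι] (N : ℝ) (a : ι → ℝ≥0∞)
    {μ : ι → Measure α} [∀ i, (μ i).HaveLebesgueDecomposition m] (hac : ∀ i, μ i ≪ m) :
    entS m N (Measure.sum fun i => a i • μ i)
      = ∫⁻ x, (∑' i, a i * (μ i).rnDeriv m x) ^ ((N - 1) / N) ∂m := by
  rw [Measure.sum_smul_eq_withDensity_tsum_rnDeriv a hac,
    entS_of_absolutelyContinuous N (withDensity_absolutelyContinuous _ _)]
  refine lintegral_congr_ae ?_
  filter_upwards [Measure.rnDeriv_withDensity m (by fun_prop :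
    Measurable fun x => ∑' i, a i * (μ i).rnDeriv m x)] with x hx
  rw [hx]

theorem tsum_rpow_mul_entS {ι : Type*} [Countable ι] {N : ℝ} (hN : 0 ≤ (N - 1) / N)
    (a : ι → ℝ≥0∞) {μ : ι → Measure α} (hac : ∀ i, μ i ≪ m) :
    ∑' i, a i ^ ((N - 1) / N) * entS m N (μ i)
      = ∫⁻ x, ∑' i, (a i * (μ i).rnDeriv m x) ^ ((N - 1) / N) ∂m := by
  rw [lintegral_tsum fun i =>
    (((Measure.measurable_rnDeriv (μ i) m).const_mul (a i)).pow_const _).aemeasurable]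
  congr 1
  ext i
  simp only [entS_of_absolutelyContinuous N (hac i), ENNReal.mul_rpow_of_nonneg _ _ hN]
  exact (lintegral_const_mul _ ((Measure.measurable_rnDeriv (μ i) m).pow_const _)).symm

end RenyiEntropy

theorem renyi_entropy_countable_convex_combination_general
    {α : Type*} [MeasurableSpace α] (m : Measure α) [SigmaFinite m]
    (N N' : ℝ) (hN' : N' ∈ Ico N (0:ℝ))
    (a : ℕ → ℝ≥0∞)
    (μ : ℕ → Measure α)
    (hprob : ∀ j, IsProbabilityMeasure (μ j)) (hac : ∀ j, μ j ≪ m) :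
    (∑' j, a j ^ (1 - 1 / N') * entS m N' (μ j)
        ≤ entS m N' (Measure.sum fun j => a j • μ j)) ∧
    (Pairwise (fun i j => Measure.MutuallySingular (μ i) (μ j)) →
      entS m N' (Measure.sum fun j => a j • μ j)
        = ∑' j, a j ^ (1 - 1 / N') * entS m N' (μ j)) := by
  have hexp : 1 - 1 / N' = (N' - 1) / N' := by rw [sub_div, div_self hN'.2.ne]
  have hp : 1 ≤ (N' - 1) / N' := by
    rw [← hexp]
    linarith [one_div_neg.2 hN'.2]
  rw [hexp, tsum_rpow_mul_entS (by linarith) a hac, entS_sum_smul N' a hac]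
  refine ⟨lintegral_mono fun x => ENNReal.tsum_rpow_le_rpow_tsum _ hp, fun hsing => ?_⟩
  refine lintegral_congr_ae ?_
  filter_upwards [Measure.ae_pairwise_rnDeriv_mul_eq_zero hsing] with x hx
  refine ENNReal.rpow_tsum_eq_tsum_rpow_of_pairwise_mul_eq_zero _ (by linarith) fun i j hij => ?_
  dsimp only
  rw [mul_mul_mul_comm, hx hij, mul_zero]

/-- superadditivity of the Rényi entropy for countable convex
combinations, with equality when the summands are pairwise mutually singular. -/
theorem renyi_entropy_countable_convex_combination
    {α : Type*} [MeasurableSpace α] (m : Measure α) [SigmaFinite m]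
    (N N' : ℝ) (hN : N < 0) (hN' : N' ∈ Ico N (0:ℝ))
    (a : ℕ → ℝ≥0∞) (ha : ∑' j, a j = 1)
    (μ : ℕ → Measure α)
    (hprob : ∀ j, IsProbabilityMeasure (μ j)) (hac : ∀ j, μ j ≪ m) :
    (∑' j, a j ^ (1 - 1 / N') * entS m N' (μ j)
        ≤ entS m N' (Measure.sum fun j => a j • μ j)) ∧
    (Pairwise (fun i j => Measure.MutuallySingular (μ i) (μ j)) →
      entS m N' (Measure.sum fun j => a j • μ j)
        = ∑' j, a j ^ (1 - 1 / N') * entS m N' (μ j)) :=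
  renyi_entropy_countable_convex_combination_general m N N' hN' a μ hprob hac
end
end
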